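/- arXiv:2405.12684 — 2 statements merged into one kernel-verified Lean document; each statement's English description precedes it below -/
import Mathlib

section
/- Suppose that, in addition to the bounded support assumption, the law p₀ of Y₀ has a Lebesgue density (also denoted p₀) which vanishes outside [0,1]^d and is L-Lipschitz continuous on ℝ^d. Then there exists a constant C, depending only on d and L, such that for every t ∈ (0, 1/2), TV( law(Y_t), p₀ ) ≤ C √t · (log(1/t))^{(d+1)/2}. -/
open MeasureTheory Real ProbabilityTheory

/-- The standard Gaussian measure `N(0, I_d)` on `ℝ^d`. -/
noncomputable def stdGaussian (d : ℕ) : Measure (EuclideanSpace ℝ (Fin d)) :=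
  volume.withDensity fun y =>
    ENNReal.ofReal ((2 * π) ^ (-(d : ℝ) / 2) * Real.exp (-‖y‖ ^ 2 / 2))

/-- Total variation distance `TV(μ, ν) = sup_{A measurable} |μ(A) − ν(A)|`. -/
noncomputable def TVdist {d : ℕ} (μ ν : Measure (EuclideanSpace ℝ (Fin d))) : ℝ :=
  ⨆ A : {s : Set (EuclideanSpace ℝ (Fin d)) // MeasurableSet s},
    |(μ A.1).toReal - (ν A.1).toReal|

noncomputable def auxD (d : ℕ) : ℝ := 2^d * (2*Real.sqrt d + 2*d + 8)

noncomputable def auxC₂ (d : ℕ) (L : NNReal) : ℝ :=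
  (L:ℝ) * auxD d * (Real.sqrt d + 1)^d *
    (volume (Metric.ball (0 : EuclideanSpace ℝ (Fin d)) 1)).toReal

variable {d : ℕ}
local notation "E" => EuclideanSpace ℝ (Fin d)

lemma auxD_nonneg : 0 ≤ auxD d := by unfold auxD; positivity
lemma auxC₂_nonneg (L : NNReal) : 0 ≤ auxC₂ d L := by
  unfold auxC₂
  have h1 : (0:ℝ) ≤ (L:ℝ) := L.coe_nonneg
  have h2 : (0:ℝ) ≤ auxD d := auxD_nonneg
  have h3 : (0:ℝ) ≤ (Real.sqrt d + 1)^d := by positivity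
  have h4 := ENNReal.toReal_nonneg (a := volume (Metric.ball (0 : EuclideanSpace ℝ (Fin d)) 1))
  positivity

lemma aux_norm_le' (p : E → ℝ)
    (hvan : ∀ y : E, (∃ i, y i ∉ Set.Icc (0:ℝ) 1) → p y = 0)
    {y : E} (hy : p y ≠ 0) : ‖y‖ ≤ Real.sqrt d := by
  have hbox : ∀ i, y i ∈ Set.Icc (0:ℝ) 1 := by
    by_contra h
    push_neg at h
    exact hy (hvan y h)
  rw [EuclideanSpace.norm_eq]
  apply Real.sqrt_le_sqrt
  calc ∑ i, ‖y i‖ ^ 2 ≤ ∑ _i : Fin d, (1:ℝ) := by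
        apply Finset.sum_le_sum
        intro i _
        have h1 := (hbox i).1
        have h2 := (hbox i).2
        rw [Real.norm_eq_abs, abs_of_nonneg h1]
        nlinarith
    _ = d := by simp

lemma aux_sup_le' (p : E → ℝ) (hd : 1 ≤ d) (L : NNReal)
    (hlip : LipschitzWith L p)
    (hvan : ∀ y : E, (∃ i, y i ∉ Set.Icc (0:ℝ) 1) → p y = 0)
    (y : E) : p y ≤ 2 * L := by
  by_cases hy : ∃ i, y i ∉ Set.Icc (0:ℝ) 1
  · rw [hvan y hy]; positivity
  · push_neg at hy
    set i0 : Fin d := ⟨0, hd⟩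
    set c : ℝ := y i0 + 1 with hc
    set y' : E := y - c • EuclideanSpace.single i0 (1:ℝ) with hy'
    have hy'0 : p y' = 0 := by
      apply hvan
      refine ⟨i0, ?_⟩
      have : y' i0 = y i0 - c := by
        simp [hy', EuclideanSpace.single_apply]
      rw [this, hc]
      simp only [Set.mem_Icc, not_and_or, not_le]
      left; linarith
    have hdist : ‖y - y'‖ ≤ 2 := by
      have : y - y' = c • EuclideanSpace.single i0 (1:ℝ) := by
        rw [hy']; abel
      rw [this, norm_smul, EuclideanSpace.norm_single]
      have h1 := (hy i0).1
      have h2 := (hy i0).2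
      simp only [norm_one, mul_one, Real.norm_eq_abs]
      rw [abs_of_nonneg (by linarith : (0:ℝ) ≤ c)]
      linarith
    have := hlip.dist_le_mul y y'
    rw [Real.dist_eq, hy'0, sub_zero] at this
    calc p y ≤ |p y| := le_abs_self _
      _ ≤ L * dist y y' := this
      _ ≤ L * 2 := by
          apply mul_le_mul_of_nonneg_left _ L.coe_nonneg
          rw [dist_eq_norm]; exact hdist
      _ = 2 * L := by ring

lemma aux_integrable' (p : E → ℝ) (hcont : Continuous p) {R : ℝ}
    (hsupp : ∀ y : E, p y ≠ 0 → ‖y‖ ≤ R) : Integrable p (volume : Measure E) := by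
  apply hcont.integrable_of_hasCompactSupport
  apply HasCompactSupport.intro (isCompact_closedBall (0:E) R)
  intro y hy
  by_contra h
  exact hy (by simpa [Metric.mem_closedBall, dist_eq_norm] using hsupp y h)

lemma aux_wd_apply' (p : E → ℝ) (hp0 : ∀ y, 0 ≤ p y) (hcont : Continuous p)
    {S : Set E} (hS : MeasurableSet S) :
    ((volume.withDensity fun y => ENNReal.ofReal (p y)) S).toReal = ∫ x in S, p x := by
  rw [withDensity_apply _ hS]
  rw [MeasureTheory.integral_eq_lintegral_of_nonneg_ae
    (Filter.Eventually.of_forall fun y => hp0 y)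
    (hcont.aestronglyMeasurable.restrict)]


set_option maxHeartbeats 2000000 in
lemma aux_step_z (hd : 1 ≤ d) (L : NNReal) (p : E → ℝ) (hp0 : ∀ y, 0 ≤ p y)
    (hlip : LipschitzWith L p)
    (hvan : ∀ y : E, (∃ i, y i ∉ Set.Icc (0:ℝ) 1) → p y = 0)
    {t : ℝ} (ht0 : 0 < t) (ht2 : t < 1/2) (z : E) {A : Set E} (hA : MeasurableSet A) :
    |((volume.withDensity fun y => ENNReal.ofReal (p y))
        ((fun x => Real.exp (-t) • x + Real.sqrt (1 - Real.exp (-2*t)) • z) ⁻¹' A)).toReal -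
      ((volume.withDensity fun y => ENNReal.ofReal (p y)) A).toReal| ≤
      Real.sqrt t * auxC₂ d L * (1 + ‖z‖)^(d+1) := by
  have hcont : Continuous p := hlip.continuous
  set s := Real.sqrt t with hs
  have hs0 : 0 < s := Real.sqrt_pos.mpr ht0
  set μt : ℝ := Real.exp (-t) with hμt
  set σt : ℝ := Real.sqrt (1 - Real.exp (-2*t)) with hσt
  have hμpos : 0 < μt := Real.exp_pos _
  have hemt : Real.exp (-t) ≥ 1/2 := by
    have := Real.add_one_le_exp (-t); linarith
  have hexp2 : Real.exp t ≤ 2 := by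
    have h := Real.exp_pos (-t)
    have : Real.exp t * Real.exp (-t) = 1 := by
      rw [← Real.exp_add]; simp
    nlinarith
  have hexp1 : (1:ℝ) ≤ Real.exp t := Real.one_le_exp ht0.le
  have hts : t ≤ s := by
    nlinarith [Real.sq_sqrt ht0.le, Real.sqrt_nonneg t,
      Real.sqrt_le_one.mpr (show t ≤ 1 by linarith)]
  have hexpt1 : Real.exp t - 1 ≤ 2*s := by
    have h2 := Real.add_one_le_exp (-t)
    have h3 : Real.exp t * Real.exp (-t) = 1 := by rw [← Real.exp_add]; simp
    nlinarith [Real.exp_pos t]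
  have hσ1 : σt ≤ 1 := by
    rw [hσt]
    have h9 : 1 - Real.exp (-2*t) ≤ 1 := by
      have := Real.exp_pos (-2*t); linarith
    calc Real.sqrt (1 - Real.exp (-2*t)) ≤ Real.sqrt 1 := Real.sqrt_le_sqrt h9
      _ = 1 := Real.sqrt_one
  have hσ0 : 0 ≤ σt := Real.sqrt_nonneg _
  have hσs : σt ≤ 2*s := by
    have h2 : 1 - Real.exp (-2*t) ≤ 2*t := by
      have := Real.add_one_le_exp (-2*t); linarith
    calc σt ≤ Real.sqrt (2*t) := Real.sqrt_le_sqrt h2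
      _ = Real.sqrt 2 * s := by rw [hs, Real.sqrt_mul (by norm_num)]
      _ ≤ 2*s := by
          have : Real.sqrt 2 ≤ 2 := by
            nlinarith [Real.sq_sqrt (show (0:ℝ) ≤ 2 by norm_num), Real.sqrt_nonneg 2]
          nlinarith
  have hed : Real.exp t ^ d ≤ 2^d := pow_le_pow_left₀ (Real.exp_pos t).le hexp2 d
  have hed1 : (1:ℝ) ≤ Real.exp t ^ d := by
    calc (1:ℝ) = 1^d := by simp
      _ ≤ Real.exp t ^ d := pow_le_pow_left₀ (by norm_num) hexp1 d
  have hedm1 : Real.exp t ^ d - 1 ≤ d * 2^d * s := by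
    have he : Real.exp t ^ d = Real.exp (d * t) := (Real.exp_nat_mul t d).symm
    have h1 : Real.exp (d*t) - 1 ≤ (d*t) * Real.exp (d*t) := by
      have h2 := Real.add_one_le_exp (-((d:ℝ)*t))
      have h3 : Real.exp ((d:ℝ)*t) * Real.exp (-((d:ℝ)*t)) = 1 := by rw [← Real.exp_add]; simp
      nlinarith [Real.exp_pos ((d:ℝ)*t)]
    rw [he]
    have hdt : Real.exp ((d:ℝ)*t) ≤ 2^d := by rw [← he]; exact hed
    have h5 : (0:ℝ) ≤ (d:ℝ) := Nat.cast_nonneg d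
    nlinarith [mul_le_mul_of_nonneg_left hdt (mul_nonneg h5 ht0.le),
      mul_le_mul_of_nonneg_left hts (mul_nonneg h5 (pow_nonneg (by norm_num : (0:ℝ) ≤ 2) d))]
  set r := ‖z‖ with hr
  have hr0 : (0:ℝ) ≤ r := norm_nonneg z
  set R : ℝ := Real.sqrt d + 1 + r with hR
  have hsd0 : (0:ℝ) ≤ Real.sqrt d := Real.sqrt_nonneg _
  have hR0 : (0:ℝ) ≤ R := by rw [hR]; positivity
  set K : ℝ := s * (L:ℝ) * auxD d * (1 + r) with hK
  have hauxD : (0:ℝ) ≤ auxD d := auxD_nonneg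
  have hK0 : (0:ℝ) ≤ K := by rw [hK]; positivity
  set φz : E → E := fun x => μt • x + σt • z with hφz
  have hφzm : Measurable φz := (measurable_id.const_smul μt).add_const _
  have hS1 : MeasurableSet (φz ⁻¹' A) := hφzm hA
  set q : E → ℝ := fun w => Real.exp t ^ d * p (Real.exp t • (w - σt • z)) with hq
  have hqcont : Continuous q := by
    apply continuous_const.mul
    exact hcont.comp (by fun_prop)
  have hqsupp : ∀ w, q w ≠ 0 → ‖w‖ ≤ R := by
    intro w hw
    have hp' : p (Real.exp t • (w - σt • z)) ≠ 0 := by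
      intro h; apply hw; rw [hq]; simp [h]
    have h1 : ‖Real.exp t • (w - σt • z)‖ ≤ Real.sqrt d := aux_norm_le' p hvan hp'
    rw [norm_smul, Real.norm_eq_abs, abs_of_pos (Real.exp_pos t)] at h1
    have h2 : ‖w - σt • z‖ ≤ Real.sqrt d := by
      nlinarith [norm_nonneg (w - σt • z)]
    calc ‖w‖ = ‖(w - σt • z) + σt • z‖ := by rw [sub_add_cancel]
      _ ≤ ‖w - σt • z‖ + ‖σt • z‖ := norm_add_le _ _
      _ ≤ Real.sqrt d + σt * r := by
          rw [norm_smul, Real.norm_eq_abs, abs_of_nonneg hσ0]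
          exact add_le_add h2 le_rfl
      _ ≤ R := by rw [hR]; nlinarith
  have hpsupp : ∀ w, p w ≠ 0 → ‖w‖ ≤ R := fun w hw =>
    le_trans (aux_norm_le' p hvan hw) (by rw [hR]; linarith)
  have hpint : Integrable p (volume : Measure E) := aux_integrable' p hcont hpsupp
  have hqint : Integrable q (volume : Measure E) := aux_integrable' q hqcont hqsupp
  rw [aux_wd_apply' p hp0 hcont hS1, aux_wd_apply' p hp0 hcont hA]
  set g : E → ℝ := Set.indicator A (fun _ => (1:ℝ)) with hg
  have hexp_cancel : ∀ x : E, Real.exp t • μt • x = x := by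
    intro x; rw [smul_smul, hμt, ← Real.exp_add]; simp
  set F : E → ℝ := fun y => g (y + σt • z) * p (Real.exp t • y) with hF
  have hCOV : ∫ x in φz ⁻¹' A, p x = ∫ w, g w * q w := by
    rw [← integral_indicator hS1]
    have e1 : ∀ x : E, Set.indicator (φz ⁻¹' A) p x = F (μt • x) := by
      intro x
      by_cases hx : x ∈ φz ⁻¹' A
      · rw [Set.indicator_of_mem hx, hF]
        have hxA : μt • x + σt • z ∈ A := hx
        simp only [hexp_cancel]
        rw [hg, Set.indicator_of_mem hxA]
        ring
      · rw [Set.indicator_of_notMem hx, hF]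
        have hxA : μt • x + σt • z ∉ A := hx
        simp only [hexp_cancel]
        rw [hg, Set.indicator_of_notMem hxA]
        ring
    calc ∫ x, Set.indicator (φz ⁻¹' A) p x
        = ∫ x, F (μt • x) := by congr 1; funext x; exact e1 x
      _ = |((μt ^ (Module.finrank ℝ (EuclideanSpace ℝ (Fin d))))⁻¹)| • ∫ y, F y :=
          MeasureTheory.Measure.integral_comp_smul volume F μt
      _ = Real.exp t ^ d * ∫ y, F y := by
          rw [finrank_euclideanSpace_fin]
          have h7 : ((μt : ℝ) ^ d)⁻¹ = Real.exp t ^ d := by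
            rw [hμt, ← Real.exp_nat_mul, ← Real.exp_nat_mul, ← Real.exp_neg]
            ring_nf
          rw [h7, abs_of_pos (by positivity), smul_eq_mul]
      _ = Real.exp t ^ d * ∫ w, g w * p (Real.exp t • (w - σt • z)) := by
          congr 1
          rw [← MeasureTheory.integral_add_right_eq_self (μ := (volume : Measure (EuclideanSpace ℝ (Fin d))))
            (fun w => g w * p (Real.exp t • (w - σt • z))) (σt • z)]
          congr 1; funext y
          rw [hF]; simp [add_sub_cancel_right]
      _ = ∫ w, g w * q w := by
          rw [← MeasureTheory.integral_const_mul]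
          congr 1; funext w; rw [hq]; ring
  have hI2 : ∫ x in A, p x = ∫ w, g w * p w := by
    rw [← integral_indicator hA]
    congr 1; funext w
    by_cases h : w ∈ A <;> simp [hg, h]
  have higq : Integrable (fun w => g w * q w) (volume : Measure E) := by
    have e : (fun w => g w * q w) = Set.indicator A q := by
      funext w; by_cases h : w ∈ A <;> simp [hg, h]
    rw [e]; exact hqint.indicator hA
  have higp : Integrable (fun w => g w * p w) (volume : Measure E) := by
    have e : (fun w => g w * p w) = Set.indicator A p := by
      funext w; by_cases h : w ∈ A <;> simp [hg, h]
    rw [e]; exact hpint.indicator hA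
  -- pointwise bound
  have hqp : ∀ w : E, |q w - p w| ≤ Set.indicator (Metric.closedBall (0:E) R) (fun _ => K) w := by
    intro w
    by_cases hw : w ∈ Metric.closedBall (0:E) R
    · rw [Set.indicator_of_mem hw]
      have hwR : ‖w‖ ≤ R := by
        simpa [Metric.mem_closedBall, dist_zero_right] using hw
      set u : E := Real.exp t • (w - σt • z) with hu
      have key : q w - p w = Real.exp t ^ d * (p u - p w) + (Real.exp t ^ d - 1) * p w := by
        rw [hq]; ring
      have hlipb : |p u - p w| ≤ (L:ℝ) * ‖u - w‖ := by
        have h8 := hlip.dist_le_mul u w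
        rwa [Real.dist_eq, dist_eq_norm] at h8
      have huw : ‖u - w‖ ≤ 2*s*R + 4*s*r := by
        have e2 : u - w = (Real.exp t - 1) • w - (Real.exp t * σt) • z := by
          rw [hu, smul_sub, smul_smul, sub_smul, one_smul]; abel
        rw [e2]
        calc ‖(Real.exp t - 1) • w - (Real.exp t * σt) • z‖
            ≤ ‖(Real.exp t - 1) • w‖ + ‖(Real.exp t * σt) • z‖ := norm_sub_le _ _
          _ = (Real.exp t - 1) * ‖w‖ + (Real.exp t * σt) * r := by
              rw [norm_smul, norm_smul, Real.norm_eq_abs, Real.norm_eq_abs,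
                abs_of_nonneg (by linarith : (0:ℝ) ≤ Real.exp t - 1),
                abs_of_nonneg (by positivity : (0:ℝ) ≤ Real.exp t * σt)]
          _ ≤ 2*s*R + 4*s*r := by
              have t1 : (Real.exp t - 1) * ‖w‖ ≤ (2*s) * R :=
                mul_le_mul hexpt1 hwR (norm_nonneg w) (by positivity)
              have t2 : (Real.exp t * σt) * r ≤ (4*s) * r := by
                apply mul_le_mul_of_nonneg_right _ hr0
                calc Real.exp t * σt ≤ 2 * σt := mul_le_mul_of_nonneg_right hexp2 hσ0
                  _ ≤ 2 * (2*s) := by linarith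
                  _ = 4*s := by ring
              linarith
      have hsup : p w ≤ 2*(L:ℝ) := aux_sup_le' p hd L hlip hvan w
      have step1 : |q w - p w| ≤ Real.exp t ^ d * |p u - p w| + (Real.exp t ^ d - 1) * p w := by
        rw [key]
        refine (abs_add_le _ _).trans ?_
        rw [abs_mul, abs_mul,
          abs_of_nonneg (by positivity : (0:ℝ) ≤ Real.exp t ^ d),
          abs_of_nonneg (by linarith : (0:ℝ) ≤ Real.exp t ^ d - 1),
          abs_of_nonneg (hp0 w)]
      have t3 : Real.exp t ^ d * |p u - p w| ≤ 2^d * ((L:ℝ) * (2*s*R + 4*s*r)) :=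
        mul_le_mul hed (hlipb.trans (mul_le_mul_of_nonneg_left huw L.coe_nonneg))
          (abs_nonneg _) (by positivity)
      have t4 : (Real.exp t ^ d - 1) * p w ≤ (d * 2^d * s) * (2*(L:ℝ)) :=
        mul_le_mul hedm1 hsup (hp0 w) (by positivity)
      have hin : 2*Real.sqrt d + 2 + 6*r + 2*(d:ℝ) ≤ (2*Real.sqrt d + 2*(d:ℝ) + 8)*(1+r) := by
        nlinarith [mul_nonneg hr0 hsd0, mul_nonneg hr0 (Nat.cast_nonneg (α := ℝ) d)]
      have base : (0:ℝ) ≤ s * (L:ℝ) * 2^d := by positivity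
      have hfin := mul_le_mul_of_nonneg_left hin base
      calc |q w - p w| ≤ 2^d * ((L:ℝ) * (2*s*R + 4*s*r)) + (d * 2^d * s) * (2*(L:ℝ)) := by
            linarith
        _ = s * (L:ℝ) * 2^d * (2*Real.sqrt d + 2 + 6*r + 2*(d:ℝ)) := by rw [hR]; ring
        _ ≤ s * (L:ℝ) * 2^d * ((2*Real.sqrt d + 2*(d:ℝ) + 8)*(1+r)) := hfin
        _ = K := by rw [hK]; unfold auxD; ring
    · rw [Set.indicator_of_notMem hw]
      have hwR : R < ‖w‖ := by
        simpa [Metric.mem_closedBall, dist_zero_right, not_le] using hw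
      have hpw : p w = 0 := by
        by_contra h; exact absurd (hpsupp w h) (not_le.mpr hwR)
      have hqw : q w = 0 := by
        by_contra h; exact absurd (hqsupp w h) (not_le.mpr hwR)
      rw [hpw, hqw]; simp
  rw [hCOV, hI2]
  have hsub : Integrable (fun w => g w * q w - g w * p w) (volume : Measure E) := higq.sub higp
  calc |(∫ w, g w * q w) - ∫ w, g w * p w|
      = |∫ w, (g w * q w - g w * p w)| := by rw [integral_sub higq higp]
    _ ≤ ∫ w, |g w * q w - g w * p w| := by
        have h9 := norm_integral_le_integral_norm (μ := (volume : Measure (EuclideanSpace ℝ (Fin d))))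
          (fun w => g w * q w - g w * p w)
        simpa [Real.norm_eq_abs] using h9
    _ ≤ ∫ w, Set.indicator (Metric.closedBall (0:E) R) (fun _ => K) w := by
        have hKint : Integrable ((Metric.closedBall (0:E) R).indicator fun _ => K)
            (volume : Measure E) := by
          apply IntegrableOn.integrable_indicator _ Metric.isClosed_closedBall.measurableSet
          exact integrableOn_const measure_closedBall_lt_top.ne
        apply integral_mono hsub.abs hKint
        intro w
        have h1 : |g w * q w - g w * p w| ≤ |q w - p w| := by
          rw [← mul_sub, abs_mul]
          by_cases h : w ∈ A
          · simp [hg, h]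
          · simp [hg, h, abs_nonneg]
        exact h1.trans (hqp w)
    _ = (volume (Metric.closedBall (0:E) R)).toReal * K := by
        rw [integral_indicator_const _ Metric.isClosed_closedBall.measurableSet, smul_eq_mul]; rfl
    _ ≤ s * auxC₂ d L * (1+r)^(d+1) := by
        have hvol : (volume (Metric.closedBall (0:E) R)).toReal
            = R^d * (volume (Metric.ball (0:E) 1)).toReal := by
          rw [Measure.addHaar_closedBall volume (0:E) hR0, finrank_euclideanSpace_fin,
            ENNReal.toReal_mul, ENNReal.toReal_ofReal (by positivity)]
        rw [hvol]
        set c : ℝ := (volume (Metric.ball (0:E) 1)).toReal with hc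
        have hc0 : (0:ℝ) ≤ c := ENNReal.toReal_nonneg
        have hRle : R ≤ (Real.sqrt d + 1) * (1 + r) := by rw [hR]; nlinarith
        have hRpow : R^d ≤ (Real.sqrt d + 1)^d * (1+r)^d := by
          rw [← mul_pow]; exact pow_le_pow_left₀ hR0 hRle d
        have base : (0:ℝ) ≤ c * (s * (L:ℝ) * auxD d * (1+r)) := by positivity
        have key := mul_le_mul_of_nonneg_right hRpow base
        calc R^d * c * K = R^d * (c * (s * (L:ℝ) * auxD d * (1+r))) := by rw [hK]; ring
          _ ≤ ((Real.sqrt d + 1)^d * (1+r)^d) * (c * (s * (L:ℝ) * auxD d * (1+r))) := key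
          _ = s * auxC₂ d L * (1+r)^(d+1) := by unfold auxC₂; rw [pow_succ, hc]; ring

lemma aux_gauss_integrable (d : ℕ) :
    Integrable (fun z : EuclideanSpace ℝ (Fin d) => (1 + ‖z‖)^(d+1)) (stdGaussian d) := by
  unfold _root_.stdGaussian
  have hgc : Continuous (fun y : EuclideanSpace ℝ (Fin d) =>
      (2 * π) ^ (-(d : ℝ) / 2) * Real.exp (-‖y‖ ^ 2 / 2)) := by
    apply continuous_const.mul
    apply Real.continuous_exp.comp
    continuity
  rw [integrable_withDensity_iff (hgc.measurable.ennreal_ofReal)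
    (Filter.Eventually.of_forall fun y => ENNReal.ofReal_lt_top)]
  have hCpos : (0:ℝ) < (2 * π) ^ (-(d : ℝ) / 2) := by
    apply Real.rpow_pos_of_pos; positivity
  have hgauss : Integrable (fun v : EuclideanSpace ℝ (Fin d) =>
      Real.exp (-(1/4) * ‖v‖^2)) (volume) := by
    have hc := GaussianFourier.integrable_cexp_neg_mul_sq_norm_add
      (V := EuclideanSpace ℝ (Fin d)) (b := (1/4 : ℂ)) (by norm_num) 0 0
    have h2 := hc.norm
    refine h2.congr (Filter.Eventually.of_forall fun a => ?_)
    have : ((-(1/4:ℂ)) * (‖a‖:ℂ)^2 + 0 * ((inner ℝ (0 : EuclideanSpace ℝ (Fin d)) a : ℝ) : ℂ)).re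
        = -(1/4) * ‖a‖^2 := by
      have h3 : ((‖a‖:ℂ))^2 = ((‖a‖^2 : ℝ) : ℂ) := by push_cast; ring
      rw [h3]
      simp only [Complex.add_re, Complex.mul_re, Complex.neg_re, Complex.ofReal_re,
        Complex.ofReal_im, Complex.zero_re, Complex.zero_im]
      norm_num
      try ring
    show ‖Complex.exp _‖ = _
    rw [Complex.norm_exp, this]
  set Cg : ℝ := (2 * π) ^ (-(d : ℝ) / 2) with hCg
  have he : ∀ x : EuclideanSpace ℝ (Fin d),
      (ENNReal.ofReal (Cg * Real.exp (-‖x‖^2/2))).toReal = Cg * Real.exp (-‖x‖^2/2) :=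
    fun x => ENNReal.toReal_ofReal (by positivity)
  simp only [he]
  apply Integrable.mono' (hgauss.const_mul (Cg * Real.exp (((d:ℝ)+1)^2)))
  · apply Continuous.aestronglyMeasurable
    apply Continuous.mul
    · have : Continuous fun x : EuclideanSpace ℝ (Fin d) => (1:ℝ) + ‖x‖ := by continuity
      exact this.pow (d+1)
    · exact hgc
  · apply Filter.Eventually.of_forall
    intro x
    set r : ℝ := ‖x‖ with hrr
    have hr0 : (0:ℝ) ≤ r := norm_nonneg x
    have h1 : (1+r)^(d+1) ≤ Real.exp (((d:ℝ)+1) * r) := by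
      have ha := Real.add_one_le_exp r
      calc (1+r)^(d+1) ≤ (Real.exp r)^(d+1) :=
            pow_le_pow_left₀ (by positivity) (by linarith) (d+1)
        _ = Real.exp (((d:ℝ)+1) * r) := by
            rw [← Real.exp_nat_mul]; push_cast; ring_nf
    have h2 : Real.exp (((d:ℝ)+1) * r) * Real.exp (-r^2/2)
        ≤ Real.exp (((d:ℝ)+1)^2) * Real.exp (-(1/4)*r^2) := by
      rw [← Real.exp_add, ← Real.exp_add]
      apply Real.exp_le_exp.mpr
      nlinarith [sq_nonneg ((d:ℝ)+1 - r/2)]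
    rw [Real.norm_eq_abs, abs_of_nonneg (by positivity)]
    calc (1+r)^(d+1) * (Cg * Real.exp (-r^2/2))
        = Cg * ((1+r)^(d+1) * Real.exp (-r^2/2)) := by ring
      _ ≤ Cg * (Real.exp (((d:ℝ)+1)*r) * Real.exp (-r^2/2)) := by
          apply mul_le_mul_of_nonneg_left _ hCpos.le
          exact mul_le_mul_of_nonneg_right h1 (Real.exp_pos _).le
      _ ≤ Cg * (Real.exp (((d:ℝ)+1)^2) * Real.exp (-(1/4)*r^2)) :=
          mul_le_mul_of_nonneg_left h2 hCpos.le
      _ = Cg * Real.exp (((d:ℝ)+1)^2) * Real.exp (-(1/4)*r^2) := by ring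

/-- Suppose that, in addition to the bounded support assumption, the law `p₀` of `Y₀`
has an `L`-Lipschitz Lebesgue density vanishing outside `[0,1]^d`. Then there exists a
constant `C > 0`, depending only on `d` and `L`, such that for every `t ∈ (0, 1/2)`,
`TV(law(Y_t), p₀) ≤ C √t (log(1/t))^{(d+1)/2}`, where
`Y_t = e^{-t} Y₀ + √(1 − e^{-2t}) Z`. -/
theorem tv_early_stopping (d : ℕ) (hd : 1 ≤ d) (L : NNReal) :
    ∃ C : ℝ, 0 < C ∧
      ∀ (Ω : Type) [MeasurableSpace Ω] (P : Measure Ω) [IsProbabilityMeasure P]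
        (Y₀ Z : Ω → EuclideanSpace ℝ (Fin d)),
        Measurable Y₀ → Measurable Z →
        (∀ᵐ ω ∂P, ∀ i, Y₀ ω i ∈ Set.Icc (0 : ℝ) 1) →
        Measure.map Z P = stdGaussian d →
        IndepFun Y₀ Z P →
        ∀ p₀ : EuclideanSpace ℝ (Fin d) → ℝ,
          Measure.map Y₀ P = volume.withDensity (fun y => ENNReal.ofReal (p₀ y)) →
          (∀ y : EuclideanSpace ℝ (Fin d), (∃ i, y i ∉ Set.Icc (0 : ℝ) 1) → p₀ y = 0) →
          LipschitzWith L p₀ →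
          ∀ t : ℝ, 0 < t → t < 1 / 2 →
            TVdist (Measure.map
                (fun ω => Real.exp (-t) • Y₀ ω + Real.sqrt (1 - Real.exp (-2 * t)) • Z ω) P)
                (Measure.map Y₀ P) ≤
              C * Real.sqrt t * Real.log (1 / t) ^ (((d : ℝ) + 1) / 2) := by
  set Md : ℝ := ∫ z : EuclideanSpace ℝ (Fin d), (1 + ‖z‖)^(d+1) ∂(stdGaussian d) with hMd
  have hMd0 : 0 ≤ Md := integral_nonneg (fun z => by positivity)
  set β : ℝ := Real.log 2 ^ (((d:ℝ)+1)/2) with hβ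
  have hβ0 : 0 < β := Real.rpow_pos_of_pos (Real.log_pos one_lt_two) _
  have hC2 : 0 ≤ auxC₂ d L := auxC₂_nonneg L
  have hnum : 0 < auxC₂ d L * Md + 1 := by nlinarith
  refine ⟨(auxC₂ d L * Md + 1)/β, div_pos hnum hβ0, ?_⟩
  intro Ω _ P _ Y₀ Z hY₀m hZm _hbox hZmap hindep p₀ hY₀map hvan₀ hlip₀ t ht0 ht2
  set p : EuclideanSpace ℝ (Fin d) → ℝ := fun y => max (p₀ y) 0 with hp
  have hp0 : ∀ y, 0 ≤ p y := fun y => le_max_right _ _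
  have hlip : LipschitzWith L p := hlip₀.max_const 0
  have hvan : ∀ y : EuclideanSpace ℝ (Fin d), (∃ i, y i ∉ Set.Icc (0:ℝ) 1) → p y = 0 :=
    fun y hy => by rw [hp]; simp [hvan₀ y hy]
  have hY₀map' : Measure.map Y₀ P = volume.withDensity fun y => ENNReal.ofReal (p y) := by
    rw [hY₀map]
    congr 1; funext y
    rcases le_total (p₀ y) 0 with h | h
    · rw [hp]; simp only [max_eq_right h]
      rw [ENNReal.ofReal_eq_zero.mpr h, ENNReal.ofReal_zero]
    · rw [hp]; simp [max_eq_left h]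
  set μt : ℝ := Real.exp (-t) with hμt
  set σt : ℝ := Real.sqrt (1 - Real.exp (-2*t)) with hσt
  set ν := Measure.map Y₀ P with hν
  set γ := Measure.map Z P with hγ
  haveI : IsProbabilityMeasure ν := Measure.isProbabilityMeasure_map hY₀m.aemeasurable
  haveI : IsProbabilityMeasure γ := Measure.isProbabilityMeasure_map hZm.aemeasurable
  set φ : EuclideanSpace ℝ (Fin d) × EuclideanSpace ℝ (Fin d) → EuclideanSpace ℝ (Fin d) :=
    fun x => μt • x.1 + σt • x.2 with hφ
  have hφm : Measurable φ := (measurable_fst.const_smul μt).add (measurable_snd.const_smul σt)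
  have hpair : Measure.map (fun ω => (Y₀ ω, Z ω)) P = ν.prod γ :=
    (indepFun_iff_map_prod_eq_prod_map_map hY₀m.aemeasurable hZm.aemeasurable).mp hindep
  have hmapeq : Measure.map (fun ω => μt • Y₀ ω + σt • Z ω) P = Measure.map φ (ν.prod γ) := by
    rw [← hpair, Measure.map_map hφm (hY₀m.prodMk hZm)]
    rfl
  haveI : Nonempty {s : Set (EuclideanSpace ℝ (Fin d)) // MeasurableSet s} :=
    ⟨⟨∅, MeasurableSet.empty⟩⟩
  apply ciSup_le
  rintro ⟨A, hA⟩
  simp only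
  rw [hmapeq, Measure.map_apply hφm hA, Measure.prod_apply_symm (hφm hA)]
  set G : EuclideanSpace ℝ (Fin d) → ENNReal :=
    fun z => ν ((fun x => μt • x + σt • z) ⁻¹' A) with hG
  have hGmeas : Measurable G := measurable_measure_prodMk_right (μ := ν) (hφm hA)
  have hGle : ∀ z, G z ≤ 1 := fun z => prob_le_one
  have hgeq : (∫⁻ y, ν ((fun x => (x, y)) ⁻¹' (φ ⁻¹' A)) ∂γ) = ∫⁻ z, G z ∂γ := rfl
  rw [hgeq]
  have hint1 : (∫⁻ z, G z ∂γ).toReal = ∫ z, (G z).toReal ∂γ :=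
    (integral_toReal hGmeas.aemeasurable
      (ae_of_all _ fun z => lt_of_le_of_lt (hGle z) ENNReal.one_lt_top)).symm
  have hc : (ν A).toReal = ∫ _z, (ν A).toReal ∂γ := by
    rw [integral_const, probReal_univ, one_smul]
  have hGint : Integrable (fun z => (G z).toReal) γ := by
    apply Integrable.mono' (integrable_const (1:ℝ))
      hGmeas.ennreal_toReal.aestronglyMeasurable
    apply ae_of_all; intro z
    rw [Real.norm_eq_abs, abs_of_nonneg ENNReal.toReal_nonneg]
    have := ENNReal.toReal_mono (by norm_num) (hGle z)
    simpa using this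
  have hBint : Integrable (fun z : EuclideanSpace ℝ (Fin d) =>
      Real.sqrt t * auxC₂ d L * (1+‖z‖)^(d+1)) γ := by
    rw [hZmap]
    exact (aux_gauss_integrable d).const_mul _
  calc |(∫⁻ z, G z ∂γ).toReal - (ν A).toReal|
      = |∫ z, ((G z).toReal - (ν A).toReal) ∂γ| := by
        rw [integral_sub hGint (integrable_const _), hint1, ← hc]
    _ ≤ ∫ z, |(G z).toReal - (ν A).toReal| ∂γ := by
        have h9 := norm_integral_le_integral_norm (μ := γ)
          (fun z => (G z).toReal - (ν A).toReal)
        simpa [Real.norm_eq_abs] using h9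
    _ ≤ ∫ z, Real.sqrt t * auxC₂ d L * (1+‖z‖)^(d+1) ∂γ := by
        apply integral_mono (hGint.sub (integrable_const _)).abs hBint
        intro z
        have hstep := aux_step_z hd L p hp0 hlip hvan ht0 ht2 z hA
        simp only [hG]
        rw [hY₀map']
        exact hstep
    _ = Real.sqrt t * auxC₂ d L * Md := by
        rw [MeasureTheory.integral_const_mul, hZmap, ← hMd]
    _ ≤ (auxC₂ d L * Md + 1)/β * Real.sqrt t * Real.log (1 / t) ^ (((d : ℝ) + 1) / 2) := by
        have hlog : Real.log 2 ≤ Real.log (1/t) := by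
          apply Real.log_le_log (by norm_num)
          rw [le_div_iff₀ ht0]; linarith
        have hβle : β ≤ Real.log (1/t) ^ (((d:ℝ)+1)/2) :=
          Real.rpow_le_rpow (Real.log_nonneg one_le_two) hlog (by positivity)
        have hst : 0 ≤ Real.sqrt t := Real.sqrt_nonneg t
        have h1 : (auxC₂ d L * Md + 1)/β * Real.sqrt t * β
            ≤ (auxC₂ d L * Md + 1)/β * Real.sqrt t * Real.log (1/t) ^ (((d:ℝ)+1)/2) := by
          apply mul_le_mul_of_nonneg_left hβle (by positivity)
        have h2 : (auxC₂ d L * Md + 1)/β * Real.sqrt t * β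
            = (auxC₂ d L * Md + 1) * Real.sqrt t := by field_simp
        nlinarith [mul_nonneg (mul_nonneg hst hC2) hMd0]
end

section
/- Assume the bounded support assumption and let 0 < T₀ < (log 2)/2, T₀ < T < ∞. If s₁, s₂ : [T₀, T] × ℝ^d → ℝ^d are measurable with sup_{t, y} ‖s_i(t, y)‖ ≤ K for i = 1, 2, then for every y₀ ∈ [0,1]^d, | ℓ_{s₁}(y₀) − ℓ_{s₂}(y₀) | ≤ √(8K² + 64d/T₀) · sup_{t ∈ [T₀,T], y ∈ ℝ^d} ‖s₁(t, y) − s₂(t, y)‖. -/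
open MeasureTheory Real
open scoped ENNReal NNReal

/-- The score-matching loss
`ℓ_s(y₀) = (1/(T−T₀)) ∫_{T₀}^T E_Z ‖s(t, μ_t y₀ + σ_t Z) − μ_t y₀ + ((1+e^{-2t})/σ_t) Z‖² dt`
with `μ_t = e^{-t}`, `σ_t = √(1 − e^{-2t})` and `Z ~ N(0, I_d)`. -/
noncomputable def lossL (d : ℕ) (T₀ T : ℝ)
    (s : ℝ → EuclideanSpace ℝ (Fin d) → EuclideanSpace ℝ (Fin d))
    (y₀ : EuclideanSpace ℝ (Fin d)) : ℝ :=
  (T - T₀)⁻¹ * ∫ t in T₀..T, ∫ z,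
    ‖s t (Real.exp (-t) • y₀ + Real.sqrt (1 - Real.exp (-2 * t)) • z) -
        Real.exp (-t) • y₀ +
        ((1 + Real.exp (-2 * t)) / Real.sqrt (1 - Real.exp (-2 * t))) • z‖ ^ 2
    ∂(stdGaussian d)

lemma gauss1d_mass : ∫ x : ℝ, Real.exp (-x ^ 2 / 2) = Real.sqrt (2 * π) := by
  have h := integral_gaussian (1/2 : ℝ)
  have : (fun x : ℝ => Real.exp (-x ^ 2 / 2)) = fun x : ℝ => Real.exp (-(1/2) * x ^ 2) := by
    funext x; ring_nf
  rw [this, h]; rw [show π/(1/2:ℝ) = 2*π by ring]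

lemma integrable_gauss1d : Integrable (fun x : ℝ => Real.exp (-x ^ 2 / 2)) := by
  have h := integrable_exp_neg_mul_sq (show (0:ℝ) < 1/2 by norm_num)
  have : (fun x : ℝ => Real.exp (-x ^ 2 / 2)) = fun x : ℝ => Real.exp (-(1/2) * x ^ 2) := by
    funext x; ring_nf
  rw [this]; exact h

lemma integrable_gauss1d_sq : Integrable (fun x : ℝ => x ^ 2 * Real.exp (-x ^ 2 / 2)) := by
  have h := integrable_rpow_mul_exp_neg_mul_sq (show (0:ℝ) < 1/2 by norm_num)
    (show (-1:ℝ) < 2 by norm_num)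
  have e : (fun x : ℝ => x ^ (2:ℝ) * Real.exp (-(1/2) * x ^ 2))
      = fun x : ℝ => x ^ (2:ℝ) * Real.exp (-x ^ 2 / 2) := by
    funext x; ring_nf
  rw [e] at h
  have : ∀ᵐ x : ℝ, x ^ (2:ℝ) * Real.exp (-x ^ 2 / 2) = x ^ 2 * Real.exp (-x ^ 2 / 2) := by
    filter_upwards [] with x
    rw [show (2:ℝ) = ((2:ℕ):ℝ) by norm_num, Real.rpow_natCast]
  exact h.congr this

lemma gauss1d_sq : ∫ x : ℝ, x ^ 2 * Real.exp (-x ^ 2 / 2) = Real.sqrt (2 * π) := by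
  have habs : (fun x : ℝ => x ^ 2 * Real.exp (-x ^ 2 / 2))
      = fun x : ℝ => |x| ^ 2 * Real.exp (-|x| ^ 2 / 2) := by
    funext x; rw [sq_abs]
  rw [habs, integral_comp_abs (f := fun t : ℝ => t ^ 2 * Real.exp (-t ^ 2 / 2))]
  have hconv : ∀ x ∈ Set.Ioi (0:ℝ),
      x ^ 2 * Real.exp (-x ^ 2 / 2) = x ^ (2:ℝ) * Real.exp (-(1/2) * x ^ (2:ℝ)) := by
    intro x _
    rw [show (2:ℝ) = ((2:ℕ):ℝ) by norm_num, Real.rpow_natCast]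
    ring_nf
  rw [setIntegral_congr_fun measurableSet_Ioi hconv,
    integral_rpow_mul_exp_neg_mul_rpow (by norm_num) (by norm_num) (by norm_num)]
  have hG : Real.Gamma ((2 + 1) / 2) = Real.sqrt π / 2 := by
    rw [show ((2:ℝ) + 1) / 2 = 1/2 + 1 by norm_num, Real.Gamma_add_one (by norm_num),
      Real.Gamma_one_half_eq]
    ring
  rw [hG]
  have h2 : ((1:ℝ)/2) ^ (-((2:ℝ) + 1) / 2) = 2 * Real.sqrt 2 := by
    rw [show ((1:ℝ)/2) = 2⁻¹ by norm_num, show (-((2:ℝ)+1)/2) = -(3/2) by norm_num,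
      Real.inv_rpow (by norm_num), ← Real.rpow_neg_one, ← Real.rpow_mul (by norm_num)]
    norm_num
    rw [show (3:ℝ)/2 = 1 + 1/2 by norm_num, Real.rpow_add (by norm_num), Real.rpow_one]
    rw [show ((1:ℝ)/2) = 2⁻¹ by norm_num] at *
    rw [show (2:ℝ) ^ (2⁻¹:ℝ) = Real.sqrt 2 by rw [Real.sqrt_eq_rpow]; norm_num]
  rw [h2, Real.sqrt_mul (by norm_num : (0:ℝ) ≤ 2) π]
  have hs2 : Real.sqrt 2 * Real.sqrt 2 = 2 := Real.mul_self_sqrt (by norm_num)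
  nlinarith [hs2]

lemma integrable_pi_term (d : ℕ) (i : Fin d) :
    Integrable (fun x : Fin d → ℝ =>
      ∏ j, ((if j = i then (x j) ^ 2 else 1) * Real.exp (-(x j) ^ 2 / 2))) := by
  apply Integrable.fintype_prod (f := fun j u => (if j = i then u ^ 2 else 1) * Real.exp (-u ^ 2 / 2))
  intro j
  rcases eq_or_ne j i with h | h
  · simpa [h] using integrable_gauss1d_sq
  · simpa [h] using integrable_gauss1d

lemma prod_term_eq (d : ℕ) (i : Fin d) (x : Fin d → ℝ) :
    (∏ j, ((if j = i then (x j) ^ 2 else 1) * Real.exp (-(x j) ^ 2 / 2)))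
      = (x i) ^ 2 * ∏ j, Real.exp (-(x j) ^ 2 / 2) := by
  rw [Finset.prod_mul_distrib]
  congr 1
  simp

lemma pi_gauss_mass (d : ℕ) :
    ∫ x : Fin d → ℝ, ∏ j, Real.exp (-(x j) ^ 2 / 2) = Real.sqrt (2 * π) ^ d := by
  rw [volume_pi, integral_fintype_prod_eq_pow (ι := Fin d) (fun u : ℝ => Real.exp (-u ^ 2 / 2)), gauss1d_mass]
  simp

lemma integrable_pi_gauss (d : ℕ) :
    Integrable (fun x : Fin d → ℝ => ∏ j, Real.exp (-(x j) ^ 2 / 2)) := by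
  apply Integrable.fintype_prod (f := fun _ u => Real.exp (-u ^ 2 / 2))
  intro j; exact integrable_gauss1d

lemma integrable_pi_moment (d : ℕ) :
    Integrable (fun x : Fin d → ℝ => (∑ i, (x i) ^ 2) * ∏ j, Real.exp (-(x j) ^ 2 / 2)) := by
  have : (fun x : Fin d → ℝ => (∑ i, (x i) ^ 2) * ∏ j, Real.exp (-(x j) ^ 2 / 2))
      = fun x => ∑ i, ∏ j, ((if j = i then (x j) ^ 2 else 1) * Real.exp (-(x j) ^ 2 / 2)) := by
    funext x
    simp_rw [prod_term_eq, Finset.sum_mul]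
  rw [this]
  exact integrable_finset_sum _ (fun i _ => integrable_pi_term d i)

lemma pi_moment (d : ℕ) :
    ∫ x : Fin d → ℝ, (∑ i, (x i) ^ 2) * ∏ j, Real.exp (-(x j) ^ 2 / 2)
      = d * Real.sqrt (2 * π) ^ d := by
  have e1 : (fun x : Fin d → ℝ => (∑ i, (x i) ^ 2) * ∏ j, Real.exp (-(x j) ^ 2 / 2))
      = fun x => ∑ i, ∏ j, ((if j = i then (x j) ^ 2 else 1) * Real.exp (-(x j) ^ 2 / 2)) := by
    funext x
    simp_rw [prod_term_eq, Finset.sum_mul]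
  rw [e1, integral_finset_sum _ (fun i _ => integrable_pi_term d i)]
  have e2 : ∀ i : Fin d,
      (∫ x : Fin d → ℝ, ∏ j, ((if j = i then (x j) ^ 2 else 1) * Real.exp (-(x j) ^ 2 / 2)))
        = Real.sqrt (2 * π) ^ d := by
    intro i
    rw [volume_pi, integral_fintype_prod_eq_prod (ι := Fin d)
      (f := fun j (u : ℝ) => (if j = i then u ^ 2 else 1) * Real.exp (-u ^ 2 / 2))]
    have : ∀ j : Fin d, (∫ u : ℝ, (if j = i then u ^ 2 else 1) * Real.exp (-u ^ 2 / 2))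
        = Real.sqrt (2 * π) := by
      intro j
      rcases eq_or_ne j i with h | h
      · simpa [h] using gauss1d_sq
      · simpa [h] using gauss1d_mass
    rw [Finset.prod_congr rfl (fun j _ => this j)]
    simp
  rw [Finset.sum_congr rfl (fun i _ => e2 i)]
  simp [mul_comm]

/-- the unnormalized density -/
noncomputable def gpdf (d : ℕ) (y : EuclideanSpace ℝ (Fin d)) : ℝ := Real.exp (-‖y‖ ^ 2 / 2)

lemma gpdf_comp (d : ℕ) (x : Fin d → ℝ) :
    gpdf d ((MeasurableEquiv.toLp 2 (Fin d → ℝ)) x)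
      = ∏ j, Real.exp (-(x j) ^ 2 / 2) := by
  unfold gpdf
  rw [EuclideanSpace.norm_eq]
  rw [Real.sq_sqrt (by positivity)]
  rw [← Real.exp_sum]
  congr 1
  rw [← Finset.sum_div, ← Finset.sum_neg_distrib]
  congr 1
  apply Finset.sum_congr rfl
  intro j _
  simp [MeasurableEquiv.toLp_apply, sq_abs]

lemma normsq_comp (d : ℕ) (x : Fin d → ℝ) :
    ‖(MeasurableEquiv.toLp 2 (Fin d → ℝ)) x‖ ^ 2 = ∑ i, (x i) ^ 2 := by
  rw [EuclideanSpace.norm_eq, Real.sq_sqrt (by positivity)]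
  apply Finset.sum_congr rfl
  intro j _
  simp [MeasurableEquiv.toLp_apply, sq_abs]

lemma euclid_integral (d : ℕ) (F : EuclideanSpace ℝ (Fin d) → ℝ) :
    ∫ z : EuclideanSpace ℝ (Fin d), F z
      = ∫ x : Fin d → ℝ, F ((MeasurableEquiv.toLp 2 (Fin d → ℝ)) x) :=
  (((EuclideanSpace.volume_preserving_symm_measurableEquiv_toLp (ι := Fin d)).symm (MeasurableEquiv.toLp 2 (Fin d → ℝ)).symm).integral_comp' F).symm

lemma euclid_integrable (d : ℕ) (F : EuclideanSpace ℝ (Fin d) → ℝ)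
    (h : Integrable (fun x : Fin d → ℝ => F ((MeasurableEquiv.toLp 2 (Fin d → ℝ)) x))) :
    Integrable F := by
  rw [← (((EuclideanSpace.volume_preserving_symm_measurableEquiv_toLp (ι := Fin d)).symm (MeasurableEquiv.toLp 2 (Fin d → ℝ)).symm).integrable_comp_emb
    (MeasurableEquiv.measurableEmbedding _))]
  exact h

lemma integrable_gpdf (d : ℕ) : Integrable (gpdf d) := by
  apply euclid_integrable
  have : (fun x : Fin d → ℝ => gpdf d ((MeasurableEquiv.toLp 2 (Fin d → ℝ)) x))
      = fun x => ∏ j, Real.exp (-(x j) ^ 2 / 2) := funext (gpdf_comp d)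
  rw [this]; exact integrable_pi_gauss d

lemma integral_gpdf (d : ℕ) : ∫ z, gpdf d z = Real.sqrt (2 * π) ^ d := by
  rw [euclid_integral]
  have : (fun x : Fin d → ℝ => gpdf d ((MeasurableEquiv.toLp 2 (Fin d → ℝ)) x))
      = fun x => ∏ j, Real.exp (-(x j) ^ 2 / 2) := funext (gpdf_comp d)
  rw [this]; exact pi_gauss_mass d

lemma integrable_gpdf_normsq (d : ℕ) :
    Integrable (fun z : EuclideanSpace ℝ (Fin d) => ‖z‖ ^ 2 * gpdf d z) := by
  apply euclid_integrable
  have : (fun x : Fin d → ℝ =>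
      ‖(MeasurableEquiv.toLp 2 (Fin d → ℝ)) x‖ ^ 2
        * gpdf d ((MeasurableEquiv.toLp 2 (Fin d → ℝ)) x))
      = fun x => (∑ i, (x i) ^ 2) * ∏ j, Real.exp (-(x j) ^ 2 / 2) := by
    funext x; rw [gpdf_comp, normsq_comp]
  rw [this]; exact integrable_pi_moment d

lemma integral_gpdf_normsq (d : ℕ) :
    ∫ z : EuclideanSpace ℝ (Fin d), ‖z‖ ^ 2 * gpdf d z = d * Real.sqrt (2 * π) ^ d := by
  rw [euclid_integral]
  have : (fun x : Fin d → ℝ =>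
      ‖(MeasurableEquiv.toLp 2 (Fin d → ℝ)) x‖ ^ 2
        * gpdf d ((MeasurableEquiv.toLp 2 (Fin d → ℝ)) x))
      = fun x => (∑ i, (x i) ^ 2) * ∏ j, Real.exp (-(x j) ^ 2 / 2) := by
    funext x; rw [gpdf_comp, normsq_comp]
  rw [this]; exact pi_moment d

lemma gpdf_pos (d : ℕ) (y : EuclideanSpace ℝ (Fin d)) : 0 < gpdf d y := Real.exp_pos _

lemma cnorm_mul (d : ℕ) : (2 * π) ^ (-(d : ℝ) / 2) * Real.sqrt (2 * π) ^ d = 1 := by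
  have h2π : (0:ℝ) < 2 * π := by positivity
  rw [Real.sqrt_eq_rpow, ← Real.rpow_natCast ((2*π) ^ ((1:ℝ)/2)) d,
    ← Real.rpow_mul h2π.le, ← Real.rpow_add h2π]
  rw [show -(d:ℝ)/2 + 1/2 * d = 0 by ring, Real.rpow_zero]

lemma cnorm_pos (d : ℕ) : (0:ℝ) < (2 * π) ^ (-(d : ℝ) / 2) := by positivity

lemma density_measurable (d : ℕ) :
    Measurable (fun y : EuclideanSpace ℝ (Fin d) =>
      ((2 * π) ^ (-(d : ℝ) / 2) * gpdf d y).toNNReal) := by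
  apply Measurable.real_toNNReal
  apply Measurable.const_mul
  unfold gpdf
  fun_prop

lemma stdGaussian_integral (d : ℕ) (F : EuclideanSpace ℝ (Fin d) → ℝ) :
    ∫ z, F z ∂(stdGaussian d)
      = ∫ z, ((2 * π) ^ (-(d : ℝ) / 2) * gpdf d z) * F z := by
  have hd : (fun y : EuclideanSpace ℝ (Fin d) =>
      ENNReal.ofReal ((2 * π) ^ (-(d : ℝ) / 2) * Real.exp (-‖y‖ ^ 2 / 2)))
      = fun y => (((2 * π) ^ (-(d : ℝ) / 2) * gpdf d y).toNNReal : ℝ≥0∞) := by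
    funext y; rfl
  rw [show stdGaussian d = volume.withDensity
      (fun y => (((2 * π) ^ (-(d : ℝ) / 2) * gpdf d y).toNNReal : ℝ≥0∞)) by
    unfold stdGaussian; rw [hd]]
  rw [integral_withDensity_eq_integral_smul (density_measurable d) F]
  congr 1
  funext z
  rw [NNReal.smul_def, Real.coe_toNNReal _ (mul_nonneg (cnorm_pos d).le (gpdf_pos d z).le)]
  rfl

lemma stdGaussian_integrable_iff (d : ℕ) (F : EuclideanSpace ℝ (Fin d) → ℝ) :
    Integrable F (stdGaussian d)
      ↔ Integrable (fun z => F z * ((2 * π) ^ (-(d : ℝ) / 2) * gpdf d z)) := by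
  unfold stdGaussian
  rw [integrable_withDensity_iff]
  · constructor
    · intro h
      apply h.congr
      filter_upwards [] with z
      rw [ENNReal.toReal_ofReal (by positivity)]
      rfl
    · intro h
      apply h.congr
      filter_upwards [] with z
      rw [ENNReal.toReal_ofReal (by positivity)]
      rfl
  · apply Measurable.ennreal_ofReal
    apply Measurable.const_mul
    fun_prop
  · filter_upwards [] with z
    exact ENNReal.ofReal_lt_top

instance stdGaussian_isProbability (d : ℕ) : IsProbabilityMeasure (stdGaussian d) := by
  constructor
  unfold stdGaussian
  rw [withDensity_apply _ MeasurableSet.univ, Measure.restrict_univ]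
  have : ∫⁻ y : EuclideanSpace ℝ (Fin d),
      ENNReal.ofReal ((2 * π) ^ (-(d : ℝ) / 2) * Real.exp (-‖y‖ ^ 2 / 2))
      = ENNReal.ofReal (∫ y : EuclideanSpace ℝ (Fin d),
          (2 * π) ^ (-(d : ℝ) / 2) * Real.exp (-‖y‖ ^ 2 / 2)) := by
    rw [MeasureTheory.ofReal_integral_eq_lintegral_ofReal]
    · exact (integrable_gpdf d).const_mul _
    · filter_upwards [] with y; positivity
  have hg : ∫ y : EuclideanSpace ℝ (Fin d), Real.exp (-‖y‖ ^ 2 / 2) = Real.sqrt (2 * π) ^ d :=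
    integral_gpdf d
  rw [this, integral_const_mul, hg, cnorm_mul d, ENNReal.ofReal_one]

lemma stdGaussian_normsq_integrable (d : ℕ) :
    Integrable (fun z : EuclideanSpace ℝ (Fin d) => ‖z‖ ^ 2) (stdGaussian d) := by
  rw [stdGaussian_integrable_iff]
  have : (fun z : EuclideanSpace ℝ (Fin d) =>
      ‖z‖ ^ 2 * ((2 * π) ^ (-(d : ℝ) / 2) * gpdf d z))
      = fun z => (2 * π) ^ (-(d : ℝ) / 2) * (‖z‖ ^ 2 * gpdf d z) := by
    funext z; ring
  rw [this]
  exact (integrable_gpdf_normsq d).const_mul _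

lemma stdGaussian_normsq_integral (d : ℕ) :
    ∫ z, ‖z‖ ^ 2 ∂(stdGaussian d) = d := by
  rw [stdGaussian_integral]
  have : (fun z : EuclideanSpace ℝ (Fin d) =>
      ((2 * π) ^ (-(d : ℝ) / 2) * gpdf d z) * ‖z‖ ^ 2)
      = fun z => (2 * π) ^ (-(d : ℝ) / 2) * (‖z‖ ^ 2 * gpdf d z) := by
    funext z; ring
  rw [this, integral_const_mul, integral_gpdf_normsq d]
  rw [show (2 * π) ^ (-(d : ℝ) / 2) * ((d:ℝ) * Real.sqrt (2 * π) ^ d)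
    = (d:ℝ) * ((2 * π) ^ (-(d : ℝ) / 2) * Real.sqrt (2 * π) ^ d) by ring, cnorm_mul d, mul_one]

lemma sigma_sq_ge (T₀ T t : ℝ) (hT₀ : 0 < T₀) (hT₀' : T₀ < Real.log 2 / 2)
    (ht : t ∈ Set.Icc T₀ T) : T₀ ≤ 1 - Real.exp (-2 * t) := by
  have hlog : Real.log 2 < 0.6931471808 := Real.log_two_lt_d9
  have hhalf : T₀ < 1/2 := by linarith
  have h1 : 1 + 2*T₀ ≤ Real.exp (2*T₀) := by
    have := Real.add_one_le_exp (2*T₀); linarith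
  have h2 : Real.exp (-2 * T₀) ≤ (1 + 2*T₀)⁻¹ := by
    rw [show (-2:ℝ) * T₀ = -(2*T₀) by ring, Real.exp_neg]
    exact inv_anti₀ (by linarith) h1
  have h3 : (1 + 2*T₀)⁻¹ ≤ 1 - T₀ := by
    rw [← one_div, div_le_iff₀ (by linarith)]
    nlinarith
  have h4 : Real.exp (-2 * t) ≤ Real.exp (-2 * T₀) :=
    Real.exp_le_exp.2 (by nlinarith [ht.1])
  linarith

lemma vec_ineq {d : ℕ} (u v w : EuclideanSpace ℝ (Fin d)) :
    ‖u - v + w‖ ^ 2 ≤ 2*‖u‖^2 + 8*‖v‖^2 + 3*‖w‖^2 := by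
  have h1 : ‖u - v + w‖ ≤ ‖u‖ + ‖v‖ + ‖w‖ := by
    calc ‖u - v + w‖ ≤ ‖u - v‖ + ‖w‖ := norm_add_le _ _
    _ ≤ ‖u‖ + ‖v‖ + ‖w‖ := by have := norm_sub_le u v; linarith
  nlinarith [norm_nonneg (u - v + w), norm_nonneg u, norm_nonneg v, norm_nonneg w, h1,
    sq_nonneg (‖u‖ - ‖v‖ - ‖w‖), sq_nonneg (2*‖v‖ - ‖w‖)]

lemma y0_normsq_le (d : ℕ) (y₀ : EuclideanSpace ℝ (Fin d))
    (hy₀ : ∀ i, y₀ i ∈ Set.Icc (0 : ℝ) 1) : ‖y₀‖ ^ 2 ≤ d := by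
  rw [EuclideanSpace.norm_eq, Real.sq_sqrt (by positivity)]
  calc (∑ i, ‖y₀ i‖ ^ 2) ≤ ∑ _i : Fin d, (1:ℝ) := by
        apply Finset.sum_le_sum
        intro i _
        have h := hy₀ i
        rw [Real.norm_eq_abs, sq_abs]
        nlinarith [h.1, h.2]
  _ = d := by simp

lemma slice_bound (d : ℕ) (T₀ T : ℝ) (hT₀ : 0 < T₀) (hT₀' : T₀ < Real.log 2 / 2)
    (s : ℝ → EuclideanSpace ℝ (Fin d) → EuclideanSpace ℝ (Fin d))
    (hs : Measurable (Function.uncurry s)) (K : ℝ)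
    (hK : ∀ t ∈ Set.Icc T₀ T, ∀ y : EuclideanSpace ℝ (Fin d), ‖s t y‖ ≤ K)
    (y₀ : EuclideanSpace ℝ (Fin d)) (hy₀ : ∀ i, y₀ i ∈ Set.Icc (0 : ℝ) 1)
    (t : ℝ) (ht : t ∈ Set.Icc T₀ T) :
    Integrable (fun z : EuclideanSpace ℝ (Fin d) =>
      ‖s t (Real.exp (-t) • y₀ + Real.sqrt (1 - Real.exp (-2 * t)) • z) -
        Real.exp (-t) • y₀ +
        ((1 + Real.exp (-2 * t)) / Real.sqrt (1 - Real.exp (-2 * t))) • z‖ ^ 2)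
      (stdGaussian d) ∧
    (∫ z, ‖s t (Real.exp (-t) • y₀ + Real.sqrt (1 - Real.exp (-2 * t)) • z) -
        Real.exp (-t) • y₀ +
        ((1 + Real.exp (-2 * t)) / Real.sqrt (1 - Real.exp (-2 * t))) • z‖ ^ 2
      ∂(stdGaussian d)) ≤ 2*K^2 + 8*d + 12*d/T₀ := by
  set a : EuclideanSpace ℝ (Fin d) := Real.exp (-t) • y₀ with ha_def
  set σt : ℝ := Real.sqrt (1 - Real.exp (-2 * t)) with hσ_def
  set bt : ℝ := (1 + Real.exp (-2 * t)) / σt with hb_def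
  have hσ2 : T₀ ≤ 1 - Real.exp (-2*t) := sigma_sq_ge T₀ T t hT₀ hT₀' ht
  have hσsq : σt ^ 2 = 1 - Real.exp (-2*t) := Real.sq_sqrt (by linarith)
  have hbt2 : bt ^ 2 ≤ 4 / T₀ := by
    rw [hb_def, div_pow, hσsq]
    apply div_le_div₀ (by positivity)
    · nlinarith [Real.exp_pos (-2*t), Real.exp_le_one_iff.2 (by nlinarith [ht.1] : -2*t ≤ 0)]
    · exact hT₀
    · linarith
  have hanorm : ‖a‖ ^ 2 ≤ d := by
    rw [ha_def, norm_smul]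
    have h1 : ‖Real.exp (-t)‖ ≤ 1 := by
      rw [Real.norm_eq_abs, abs_of_pos (Real.exp_pos _)]
      exact Real.exp_le_one_iff.2 (by nlinarith [ht.1])
    have h2 := y0_normsq_le d y₀ hy₀
    have h3 : (0:ℝ) ≤ ‖Real.exp (-t)‖ := norm_nonneg _
    rw [mul_pow]
    have ha1 : ‖Real.exp (-t)‖^2 ≤ 1 := by nlinarith
    nlinarith [sq_nonneg ‖y₀‖]
  -- measurability
  have hinner : Measurable (fun z : EuclideanSpace ℝ (Fin d) => a + σt • z) :=
    (measurable_id.const_smul σt).const_add a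
  have hu : Measurable (fun z : EuclideanSpace ℝ (Fin d) => s t (a + σt • z)) :=
    hs.comp (measurable_const.prodMk hinner)
  have hf : Measurable (fun z : EuclideanSpace ℝ (Fin d) =>
      ‖s t (a + σt • z) - a + bt • z‖ ^ 2) :=
    (((hu.sub measurable_const).add (measurable_id.const_smul bt)).norm).pow_const 2
  -- pointwise bound
  have hpt : ∀ z : EuclideanSpace ℝ (Fin d),
      ‖s t (a + σt • z) - a + bt • z‖ ^ 2 ≤ (2*K^2 + 8*d) + 3*(4/T₀) * ‖z‖^2 := by
    intro z
    have h1 := vec_ineq (s t (a + σt • z)) a (bt • z)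
    have h2 : ‖bt • z‖^2 = bt^2 * ‖z‖^2 := by
      rw [norm_smul, mul_pow, Real.norm_eq_abs, sq_abs]
    have h3 : ‖s t (a + σt • z)‖ ≤ K := hK t ht _
    have h4 : (0:ℝ) ≤ ‖s t (a + σt • z)‖ := norm_nonneg _
    have h5 : (0:ℝ) ≤ ‖z‖^2 := by positivity
    nlinarith
  have hgint : Integrable (fun z : EuclideanSpace ℝ (Fin d) =>
      (2*K^2 + 8*d) + 3*(4/T₀) * ‖z‖^2) (stdGaussian d) :=
    (integrable_const _).add ((stdGaussian_normsq_integrable d).const_mul _)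
  have hint : Integrable (fun z : EuclideanSpace ℝ (Fin d) =>
      ‖s t (a + σt • z) - a + bt • z‖ ^ 2) (stdGaussian d) := by
    apply hgint.mono' hf.aestronglyMeasurable
    filter_upwards [] with z
    rw [Real.norm_eq_abs, abs_of_nonneg (by positivity)]
    exact hpt z
  refine ⟨hint, ?_⟩
  calc (∫ z, ‖s t (a + σt • z) - a + bt • z‖ ^ 2 ∂(stdGaussian d))
      ≤ ∫ z, ((2*K^2 + 8*d) + 3*(4/T₀) * ‖z‖^2) ∂(stdGaussian d) :=
        integral_mono hint hgint hpt
    _ = (2*K^2 + 8*d) + 3*(4/T₀) * (d:ℝ) := by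
        rw [integral_add (integrable_const _) ((stdGaussian_normsq_integrable d).const_mul _),
          integral_const, integral_const_mul, stdGaussian_normsq_integral d]
        simp
    _ = 2*K^2 + 8*d + 12*d/T₀ := by ring

/-- abstract slice difference bound -/
lemma slice_diff (d : ℕ) (hd : 1 ≤ d) (T₀ K C ε : ℝ) (hT₀ : 0 < T₀) (hT₀h : T₀ ≤ 1/2)
    (hC2 : C ^ 2 = 8 * K ^ 2 + 64 * (d:ℝ) / T₀) (hC : 0 < C) (hε0 : 0 ≤ ε)
    (f₁ f₂ : EuclideanSpace ℝ (Fin d) → ℝ)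
    (A B : EuclideanSpace ℝ (Fin d) → EuclideanSpace ℝ (Fin d))
    (hf₁ : ∀ z, f₁ z = ‖A z‖ ^ 2) (hf₂ : ∀ z, f₂ z = ‖B z‖ ^ 2)
    (hAB : ∀ z, ‖A z - B z‖ ≤ ε)
    (int₁ : Integrable f₁ (stdGaussian d)) (int₂ : Integrable f₂ (stdGaussian d))
    (bnd₁ : (∫ z, f₁ z ∂(stdGaussian d)) ≤ 2*K^2 + 8*d + 12*d/T₀)
    (bnd₂ : (∫ z, f₂ z ∂(stdGaussian d)) ≤ 2*K^2 + 8*d + 12*d/T₀) :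
    |(∫ z, f₁ z ∂(stdGaussian d)) - ∫ z, f₂ z ∂(stdGaussian d)| ≤ C * ε := by
  have hpt : ∀ z, |f₁ z - f₂ z| ≤ ε * ((f₁ z + f₂ z) / C + C / 2) := by
    intro z
    have h1 : f₁ z - f₂ z = (‖A z‖ - ‖B z‖) * (‖A z‖ + ‖B z‖) := by
      rw [hf₁ z, hf₂ z]; ring
    have hnn : (0:ℝ) ≤ ‖A z‖ + ‖B z‖ := by positivity
    have h2 : |f₁ z - f₂ z| ≤ ε * (‖A z‖ + ‖B z‖) := by
      rw [h1, abs_mul, abs_of_nonneg hnn]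
      exact mul_le_mul_of_nonneg_right ((abs_norm_sub_norm_le _ _).trans (hAB z)) hnn
    have h3 : ‖A z‖ + ‖B z‖ ≤ (f₁ z + f₂ z) / C + C / 2 := by
      rw [hf₁ z, hf₂ z, ← sub_nonneg]
      have hexp : (‖A z‖^2 + ‖B z‖^2) / C + C / 2 - (‖A z‖ + ‖B z‖)
          = (‖A z‖^2 + ‖B z‖^2 + C^2/2 - C * (‖A z‖ + ‖B z‖)) / C := by
        field_simp
      rw [hexp]
      apply div_nonneg _ hC.le
      nlinarith [sq_nonneg (‖A z‖ - C/2), sq_nonneg (‖B z‖ - C/2)]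
    calc |f₁ z - f₂ z| ≤ ε * (‖A z‖ + ‖B z‖) := h2
      _ ≤ ε * ((f₁ z + f₂ z) / C + C / 2) := mul_le_mul_of_nonneg_left h3 hε0
  have i12 : Integrable (fun z => (f₁ z + f₂ z) / C) (stdGaussian d) :=
    (int₁.add int₂).div_const C
  have hgint : Integrable (fun z => ε * ((f₁ z + f₂ z) / C + C / 2)) (stdGaussian d) :=
    (i12.add (integrable_const _)).const_mul ε
  calc |(∫ z, f₁ z ∂(stdGaussian d)) - ∫ z, f₂ z ∂(stdGaussian d)|
      = |∫ z, (f₁ z - f₂ z) ∂(stdGaussian d)| := by rw [integral_sub int₁ int₂]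
    _ ≤ ∫ z, |f₁ z - f₂ z| ∂(stdGaussian d) := by
        simpa [Real.norm_eq_abs] using
          norm_integral_le_integral_norm (μ := stdGaussian d) (fun z => f₁ z - f₂ z)
    _ ≤ ∫ z, ε * ((f₁ z + f₂ z) / C + C / 2) ∂(stdGaussian d) :=
        integral_mono (int₁.sub int₂).abs hgint hpt
    _ = ε * (((∫ z, f₁ z ∂(stdGaussian d)) + ∫ z, f₂ z ∂(stdGaussian d)) / C + C / 2) := by
        rw [integral_const_mul, integral_add i12 (integrable_const _),
          integral_div, integral_add int₁ int₂, integral_const]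
        simp
    _ ≤ ε * C := by
        apply mul_le_mul_of_nonneg_left _ hε0
        have hsum : (∫ z, f₁ z ∂(stdGaussian d)) + (∫ z, f₂ z ∂(stdGaussian d))
            ≤ C^2/2 := by
          have hdd : (16:ℝ)*d ≤ 8*d/T₀ := by
            rw [le_div_iff₀ hT₀]
            have : (0:ℝ) ≤ d := Nat.cast_nonneg d
            nlinarith
          have : 2*(2*K^2 + 8*(d:ℝ) + 12*d/T₀) ≤ C^2/2 := by
            rw [hC2]
            have e1 : 12*(d:ℝ)/T₀ = (3/2)*(8*(d:ℝ)/T₀) := by ring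
            have e2 : 64*(d:ℝ)/T₀ = 8*(8*(d:ℝ)/T₀) := by ring
            rw [e1, e2] at *
            linarith
          linarith
        have : ((∫ z, f₁ z ∂(stdGaussian d)) + ∫ z, f₂ z ∂(stdGaussian d)) / C ≤ C/2 := by
          rw [div_le_iff₀ hC]
          nlinarith
        linarith
    _ = C * ε := mul_comm _ _

/-- If `0 < T₀ < (log 2)/2`, `T₀ < T < ∞`, and `s₁, s₂` are measurable with
`sup_{t,y} ‖s_i(t,y)‖ ≤ K`, then for every `y₀ ∈ [0,1]^d`,
`|ℓ_{s₁}(y₀) − ℓ_{s₂}(y₀)| ≤ √(8K² + 64d/T₀) · sup_{t ∈ [T₀,T], y} ‖s₁(t,y) − s₂(t,y)‖`. -/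
theorem loss_lipschitz (d : ℕ) (hd : 1 ≤ d)
    (T₀ T : ℝ) (hT₀ : 0 < T₀) (hT₀' : T₀ < Real.log 2 / 2) (hT : T₀ < T)
    (s₁ s₂ : ℝ → EuclideanSpace ℝ (Fin d) → EuclideanSpace ℝ (Fin d))
    (hs₁ : Measurable (Function.uncurry s₁)) (hs₂ : Measurable (Function.uncurry s₂))
    (K : ℝ)
    (hK₁ : ∀ t ∈ Set.Icc T₀ T, ∀ y : EuclideanSpace ℝ (Fin d), ‖s₁ t y‖ ≤ K)
    (hK₂ : ∀ t ∈ Set.Icc T₀ T, ∀ y : EuclideanSpace ℝ (Fin d), ‖s₂ t y‖ ≤ K)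
    (y₀ : EuclideanSpace ℝ (Fin d)) (hy₀ : ∀ i, y₀ i ∈ Set.Icc (0 : ℝ) 1) :
    |lossL d T₀ T s₁ y₀ - lossL d T₀ T s₂ y₀| ≤
      Real.sqrt (8 * K ^ 2 + 64 * (d : ℝ) / T₀) *
        ⨆ p : Set.Icc T₀ T × EuclideanSpace ℝ (Fin d), ‖s₁ p.1 p.2 - s₂ p.1 p.2‖ := by
  have hTle : T₀ ≤ T := hT.le
  have hT₀mem : T₀ ∈ Set.Icc T₀ T := ⟨le_refl _, hTle⟩
  have hK0 : 0 ≤ K := (norm_nonneg _).trans (hK₁ T₀ hT₀mem 0)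
  set ε := ⨆ p : Set.Icc T₀ T × EuclideanSpace ℝ (Fin d), ‖s₁ p.1 p.2 - s₂ p.1 p.2‖ with hε_def
  have hbdd : BddAbove (Set.range fun p : Set.Icc T₀ T × EuclideanSpace ℝ (Fin d) =>
      ‖s₁ p.1 p.2 - s₂ p.1 p.2‖) := by
    refine ⟨2*K, ?_⟩
    rintro x ⟨p, rfl⟩
    calc ‖s₁ p.1 p.2 - s₂ p.1 p.2‖ ≤ ‖s₁ p.1 p.2‖ + ‖s₂ p.1 p.2‖ := norm_sub_le _ _
      _ ≤ 2*K := by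
        have h1 := hK₁ p.1 p.1.2 p.2
        have h2 := hK₂ p.1 p.1.2 p.2
        linarith
  have hε : ∀ t (ht : t ∈ Set.Icc T₀ T) (y : EuclideanSpace ℝ (Fin d)),
      ‖s₁ t y - s₂ t y‖ ≤ ε :=
    fun t ht y => le_ciSup hbdd (⟨⟨t, ht⟩, y⟩ : Set.Icc T₀ T × EuclideanSpace ℝ (Fin d))
  have hε0 : 0 ≤ ε := (norm_nonneg _).trans (hε T₀ hT₀mem 0)
  have hdpos : (0:ℝ) < d := by exact_mod_cast Nat.pos_of_ne_zero (by omega)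
  have hCin : (0:ℝ) < 8 * K ^ 2 + 64 * (d : ℝ) / T₀ := by
    have : (0:ℝ) < 64 * (d:ℝ) / T₀ := by positivity
    nlinarith
  set C := Real.sqrt (8 * K ^ 2 + 64 * (d : ℝ) / T₀) with hC_def
  have hC : 0 < C := Real.sqrt_pos.2 hCin
  have hC2 : C ^ 2 = 8 * K ^ 2 + 64 * (d : ℝ) / T₀ := Real.sq_sqrt hCin.le
  have hT₀h : T₀ ≤ 1/2 := by
    have := Real.log_two_lt_d9; linarith
  -- the inner integrals
  set I₁ : ℝ → ℝ := fun t => ∫ z,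
    ‖s₁ t (Real.exp (-t) • y₀ + Real.sqrt (1 - Real.exp (-2 * t)) • z) -
        Real.exp (-t) • y₀ +
        ((1 + Real.exp (-2 * t)) / Real.sqrt (1 - Real.exp (-2 * t))) • z‖ ^ 2
    ∂(stdGaussian d) with hI₁_def
  set I₂ : ℝ → ℝ := fun t => ∫ z,
    ‖s₂ t (Real.exp (-t) • y₀ + Real.sqrt (1 - Real.exp (-2 * t)) • z) -
        Real.exp (-t) • y₀ +
        ((1 + Real.exp (-2 * t)) / Real.sqrt (1 - Real.exp (-2 * t))) • z‖ ^ 2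
    ∂(stdGaussian d) with hI₂_def
  -- strong measurability of I₁, I₂
  have hcont1 : Continuous (fun p : ℝ × EuclideanSpace ℝ (Fin d) =>
      Real.exp (-p.1) • y₀ + Real.sqrt (1 - Real.exp (-2 * p.1)) • p.2) := by
    apply Continuous.add
    · exact ((Real.continuous_exp.comp continuous_fst.neg).smul continuous_const)
    · exact ((continuous_const.sub (Real.continuous_exp.comp
        (continuous_const.mul continuous_fst))).sqrt.smul continuous_snd)
  have hamap : Measurable (fun p : ℝ × EuclideanSpace ℝ (Fin d) => Real.exp (-p.1) • y₀) :=
    ((Real.continuous_exp.comp continuous_fst.neg).smul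
      (continuous_const : Continuous fun _ : ℝ × EuclideanSpace ℝ (Fin d) => y₀)).measurable
  have hcoefm : Measurable (fun p : ℝ × EuclideanSpace ℝ (Fin d) =>
      ((1 + Real.exp (-2 * p.1)) / Real.sqrt (1 - Real.exp (-2 * p.1))) • p.2) := by
    refine Measurable.smul (f := fun p : ℝ × EuclideanSpace ℝ (Fin d) => (1 + Real.exp (-2 * p.1)) / Real.sqrt (1 - Real.exp (-2 * p.1))) (g := fun p : ℝ × EuclideanSpace ℝ (Fin d) => p.2) ?_ measurable_snd
    apply Measurable.div
    · exact (continuous_const.add (Real.continuous_exp.comp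
        (continuous_const.mul continuous_fst))).measurable
    · exact ((continuous_const.sub (Real.continuous_exp.comp
        (continuous_const.mul continuous_fst))).sqrt).measurable
  have hSM : ∀ (s : ℝ → EuclideanSpace ℝ (Fin d) → EuclideanSpace ℝ (Fin d)),
      Measurable (Function.uncurry s) →
      StronglyMeasurable (fun t => ∫ z,
        ‖s t (Real.exp (-t) • y₀ + Real.sqrt (1 - Real.exp (-2 * t)) • z) -
          Real.exp (-t) • y₀ +
          ((1 + Real.exp (-2 * t)) / Real.sqrt (1 - Real.exp (-2 * t))) • z‖ ^ 2
        ∂(stdGaussian d)) := by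
    intro s hs
    have hu : Measurable (fun p : ℝ × EuclideanSpace ℝ (Fin d) =>
        s p.1 (Real.exp (-p.1) • y₀ + Real.sqrt (1 - Real.exp (-2 * p.1)) • p.2)) :=
      hs.comp (measurable_fst.prodMk hcont1.measurable)
    have hF : Measurable (fun p : ℝ × EuclideanSpace ℝ (Fin d) =>
        ‖s p.1 (Real.exp (-p.1) • y₀ + Real.sqrt (1 - Real.exp (-2 * p.1)) • p.2) -
          Real.exp (-p.1) • y₀ +
          ((1 + Real.exp (-2 * p.1)) / Real.sqrt (1 - Real.exp (-2 * p.1))) • p.2‖ ^ 2) :=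
      (((hu.sub hamap).add hcoefm).norm).pow_const 2
    exact hF.stronglyMeasurable.integral_prod_right'
  have hSM₁ := hSM s₁ hs₁
  have hSM₂ := hSM s₂ hs₂
  -- slice facts
  have hslice₁ := fun t (ht : t ∈ Set.Icc T₀ T) =>
    slice_bound d T₀ T hT₀ hT₀' s₁ hs₁ K hK₁ y₀ hy₀ t ht
  have hslice₂ := fun t (ht : t ∈ Set.Icc T₀ T) =>
    slice_bound d T₀ T hT₀ hT₀' s₂ hs₂ K hK₂ y₀ hy₀ t ht
  have hM0 : (0:ℝ) ≤ 2*K^2 + 8*d + 12*d/T₀ := by positivity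
  have hIbnd : ∀ t ∈ Set.Icc T₀ T, |I₁ t| ≤ 2*K^2 + 8*d + 12*d/T₀ := by
    intro t ht
    rw [abs_of_nonneg (integral_nonneg (fun z => by positivity))]
    exact (hslice₁ t ht).2
  have hIbnd₂ : ∀ t ∈ Set.Icc T₀ T, |I₂ t| ≤ 2*K^2 + 8*d + 12*d/T₀ := by
    intro t ht
    rw [abs_of_nonneg (integral_nonneg (fun z => by positivity))]
    exact (hslice₂ t ht).2
  -- interval integrability
  have hII : ∀ (I : ℝ → ℝ), StronglyMeasurable I →
      (∀ t ∈ Set.Icc T₀ T, |I t| ≤ 2*K^2 + 8*d + 12*d/T₀) →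
      IntervalIntegrable I volume T₀ T := by
    intro I hSMI hb
    rw [intervalIntegrable_iff, Set.uIoc_of_le hTle]
    apply Integrable.mono' (g := fun _ => 2*K^2 + 8*(d:ℝ) + 12*d/T₀)
    · exact integrableOn_const measure_Ioc_lt_top.ne
    · exact hSMI.aestronglyMeasurable.restrict
    · rw [ae_restrict_iff' measurableSet_Ioc]
      filter_upwards [] with t ht
      rw [Real.norm_eq_abs]
      exact hb t (Set.Ioc_subset_Icc_self ht)
  have hII₁ : IntervalIntegrable I₁ volume T₀ T := hII I₁ hSM₁ hIbnd
  have hII₂ : IntervalIntegrable I₂ volume T₀ T := hII I₂ hSM₂ hIbnd₂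
  -- slice difference bound
  have hdiff : ∀ t ∈ Set.Icc T₀ T, |I₁ t - I₂ t| ≤ C * ε := by
    intro t ht
    apply slice_diff d hd T₀ K C ε hT₀ hT₀h hC2 hC hε0 _ _
      (fun z => s₁ t (Real.exp (-t) • y₀ + Real.sqrt (1 - Real.exp (-2 * t)) • z) -
        Real.exp (-t) • y₀ +
        ((1 + Real.exp (-2 * t)) / Real.sqrt (1 - Real.exp (-2 * t))) • z)
      (fun z => s₂ t (Real.exp (-t) • y₀ + Real.sqrt (1 - Real.exp (-2 * t)) • z) -
        Real.exp (-t) • y₀ +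
        ((1 + Real.exp (-2 * t)) / Real.sqrt (1 - Real.exp (-2 * t))) • z)
      (fun z => rfl) (fun z => rfl) _
      (hslice₁ t ht).1 (hslice₂ t ht).1 (hslice₁ t ht).2 (hslice₂ t ht).2
    intro z
    have heq : (s₁ t (Real.exp (-t) • y₀ + Real.sqrt (1 - Real.exp (-2 * t)) • z) -
        Real.exp (-t) • y₀ +
        ((1 + Real.exp (-2 * t)) / Real.sqrt (1 - Real.exp (-2 * t))) • z) -
        (s₂ t (Real.exp (-t) • y₀ + Real.sqrt (1 - Real.exp (-2 * t)) • z) -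
        Real.exp (-t) • y₀ +
        ((1 + Real.exp (-2 * t)) / Real.sqrt (1 - Real.exp (-2 * t))) • z)
        = s₁ t (Real.exp (-t) • y₀ + Real.sqrt (1 - Real.exp (-2 * t)) • z) -
          s₂ t (Real.exp (-t) • y₀ + Real.sqrt (1 - Real.exp (-2 * t)) • z) := by
      abel
    rw [heq]
    exact hε t ht _
  -- final assembly
  have hloss : lossL d T₀ T s₁ y₀ - lossL d T₀ T s₂ y₀
      = (T - T₀)⁻¹ * ∫ t in T₀..T, (I₁ t - I₂ t) := by
    unfold lossL
    rw [intervalIntegral.integral_sub hII₁ hII₂]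
    ring
  rw [hloss, abs_mul, abs_of_nonneg (inv_nonneg.2 (by linarith : (0:ℝ) ≤ T - T₀))]
  have hbound : |∫ t in T₀..T, (I₁ t - I₂ t)| ≤ (C * ε) * |T - T₀| := by
    rw [← Real.norm_eq_abs (∫ t in T₀..T, (I₁ t - I₂ t))]
    apply intervalIntegral.norm_integral_le_of_norm_le_const
    intro x hx
    rw [Set.uIoc_of_le hTle] at hx
    rw [Real.norm_eq_abs]
    exact hdiff x (Set.Ioc_subset_Icc_self hx)
  calc (T - T₀)⁻¹ * |∫ t in T₀..T, (I₁ t - I₂ t)|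
      ≤ (T - T₀)⁻¹ * ((C * ε) * |T - T₀|) := by
        apply mul_le_mul_of_nonneg_left hbound (inv_nonneg.2 (by linarith))
    _ = C * ε := by
        rw [abs_of_pos (by linarith : (0:ℝ) < T - T₀)]
        field_simp
        rw [mul_div_cancel_left₀ _ (by linarith : T - T₀ ≠ 0)]
end
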